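/- Let b be a nonnegative integer with binary digits c_0,…,c_{s−1} where s = ⌈log(b+1)⌉. The system over nonnegative integers z, y_0,…,y_{s−1} given by z = 1, z = y_0, and z + y_0 + ⋯ + y_{i−1} = y_i for i = 1,…,s−1 has a unique solution, in which y_i = 2^i for all i; consequently for any x ∈ ℕ^ℓ and a ∈ ℕ^ℓ, the constraint aᵀx = b is equivalent to aᵀx − Σ_{i<s} c_i·y_i = 0 in the combined system. -/

import Mathlib

/-!
The recurrence `y i = z + ∑_{j<i} y j` forces, by strong induction on `i`, `y i = z * 2 ^ i`,
because `1 + ∑_{k<i} 2 ^ k = 2 ^ i`. With `z = 1` the weighted sum `∑ c_i y_i` is then the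
binary expansion of `b`, which has no digits beyond position `s` since `b < 2 ^ s`.
-/

open Finset

theorem Fin.sum_filter_lt_eq_sum_range {M : Type*} [AddCommMonoid M] {s : ℕ} (i : Fin s)
    (g : ℕ → M) : ∑ j ∈ univ.filter (· < i), g j = ∑ k ∈ range i, g k := by
  rw [filter_gt_eq_Iio, ← Nat.Iio_eq_range, ← Fin.map_valEmbedding_Iio, sum_map]
  rfl

theorem add_sum_mul_two_pow {R : Type*} [Semiring R] (z : R) (n : ℕ) :
    z + ∑ k ∈ range n, z * 2 ^ k = z * 2 ^ n := by
  have geom := geom_sum_mul_add (1 : R) n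
  rw [one_add_one_eq_two, mul_one] at geom
  rw [← mul_sum, ← geom, mul_add, mul_one, add_comm]

theorem add_sum_filter_lt_eq_iff {R : Type*} [Semiring R] {s : ℕ} (z : R) (y : Fin s → R) :
    (∀ i, z + ∑ j ∈ univ.filter (· < i), y j = y i) ↔ ∀ i, y i = z * 2 ^ (i : ℕ) := by
  constructor
  · intro hy i
    induction i using WellFoundedLT.induction with
    | ind i ih =>
      rw [← hy i, ← add_sum_mul_two_pow, ← Fin.sum_filter_lt_eq_sum_range i]
      exact congrArg (z + ·) (sum_congr rfl fun j hj => ih j (mem_filter.mp hj).2)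
  · intro hy i
    simp_rw [hy]
    rw [Fin.sum_filter_lt_eq_sum_range i (fun k => z * 2 ^ k), add_sum_mul_two_pow]

theorem Nat.sum_range_testBit_mul_two_pow {b s : ℕ} (hb : b < 2 ^ s) :
    ∑ k ∈ range s, (if b.testBit k then 1 else 0) * 2 ^ k = b := by
  have hbits : (range s).filter (b.testBit · = true) = b.bitIndices.toFinset := by
    ext k
    simp only [mem_filter, mem_range, List.mem_toFinset, Nat.mem_bitIndices, and_iff_right_iff_imp]
    intro hk
    exact (Nat.pow_lt_pow_iff_right one_lt_two).mp
      ((Nat.two_pow_le_of_mem_bitIndices (Nat.mem_bitIndices.mpr hk)).trans_lt hb)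
  simp_rw [ite_mul, one_mul, zero_mul]
  rw [← sum_filter, hbits, List.sum_toFinset _ Nat.bitIndices_nodup,
    Nat.sum_map_two_pow_bitIndices]

theorem Nat.lt_two_pow_clog_succ (b : ℕ) : b < 2 ^ Nat.clog 2 (b + 1) :=
  Nat.le_pow_clog one_lt_two (b + 1)

/-- the powers-of-two gadget for reducing target entries. With
s = ⌈log(b+1)⌉ and binary digits c₀,…,c_{s−1} of b, the system z = 1 and
z + y₀ + ⋯ + y_{i−1} = y_i for i = 0,…,s−1 (the case i = 0 reading z = y₀) has
the unique solution z = 1, y_i = 2^i; consequently for any a, x ∈ ℕ^ℓ the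
constraint aᵀx = b is equivalent to aᵀx − Σ_{i<s} c_i·y_i = 0 in the combined
system. -/
theorem target_reduction_gadget (b s : ℕ) (hs : s = Nat.clog 2 (b + 1)) :
    (∀ (z : ℕ) (y : Fin s → ℕ),
      ((z = 1 ∧ ∀ i : Fin s, z + ∑ j ∈ Finset.univ.filter (· < i), y j = y i) ↔
        (z = 1 ∧ ∀ i : Fin s, y i = 2 ^ (i : ℕ)))) ∧
    (∀ (ℓ : ℕ) (a x : Fin ℓ → ℕ),
      (∑ i, a i * x i = b ↔
        ∃ (z : ℕ) (y : Fin s → ℕ),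
          z = 1 ∧
          (∀ i : Fin s, z + ∑ j ∈ Finset.univ.filter (· < i), y j = y i) ∧
          ∑ i, a i * x i =
            ∑ i : Fin s, (if b.testBit (i : ℕ) then 1 else 0) * y i)) := by
  have unique_solution (z : ℕ) (y : Fin s → ℕ) :
      (z = 1 ∧ ∀ i : Fin s, z + ∑ j ∈ univ.filter (· < i), y j = y i) ↔
        (z = 1 ∧ ∀ i : Fin s, y i = 2 ^ (i : ℕ)) := by
    refine and_congr_right fun hz => ?_
    rw [add_sum_filter_lt_eq_iff, hz]
    simp only [one_mul]
  have binary_expansion : ∑ i : Fin s, (if b.testBit i then 1 else 0) * 2 ^ (i : ℕ) = b := by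
    rw [Fin.sum_univ_eq_sum_range (fun k => (if b.testBit k then 1 else 0) * 2 ^ k)]
    exact Nat.sum_range_testBit_mul_two_pow (hs ▸ Nat.lt_two_pow_clog_succ b)
  refine ⟨unique_solution, fun ℓ a x => ⟨fun h => ?_, ?_⟩⟩
  · obtain ⟨-, hrec⟩ := (unique_solution 1 fun i => 2 ^ (i : ℕ)).mpr ⟨rfl, fun _ => rfl⟩
    exact ⟨1, _, rfl, hrec, h.trans binary_expansion.symm⟩
  · rintro ⟨z, y, hz, hrec, hsum⟩
    obtain ⟨-, hy⟩ := (unique_solution z y).mp ⟨hz, hrec⟩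
    simpa only [hy, binary_expansion] using hsum
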